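/- arXiv:1608.01564 — 3 statements merged into one kernel-verified Lean document; each statement's English description precedes it below -/
import Mathlib

section
/- Let H_n denote the physicists' Hermite polynomials (orthogonal on ℝ with weight e^{−t²}, leading coefficient 2ⁿ). For nonnegative integers x ≠ y and any real r, ∫_r^∞ H_x(t) H_y(t) e^{−t²} dt = −(1/2) e^{−r²} (H_{x+1}(r) H_y(r) − H_x(r) H_{y+1}(r)) / (x − y). -/
/-!
With `W(t) = (H_{x+1}(t) H_y(t) − H_x(t) H_{y+1}(t)) e^{−t²}`, the three-term recurrence and
`H_n' = 2t H_n − H_{n+1}` give `W' = 2(x − y) H_x H_y e^{−t²}`. Polynomials times `e^{−t²}` decay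
faster than `e^{−t}`, so `W → 0` at `+∞` and the integrand is integrable on `(r, ∞)`; the
fundamental theorem of calculus then gives `2(x − y) ∫_r^∞ H_x H_y e^{−t²} = −W(r)`.
-/

/-- The physicists' Hermite polynomials `H_n`, defined by `H_0 = 1`, `H_1 = 2t`,
`H_{n+2}(t) = 2t H_{n+1}(t) − 2(n+1) H_n(t)`; these are orthogonal on `ℝ` with weight
`e^{−t²}` and have leading coefficient `2ⁿ`. -/
noncomputable def hermiteH : ℕ → ℝ → ℝ
  | 0, _ => 1
  | 1, t => 2 * t
  | n + 2, t => 2 * t * hermiteH (n + 1) t - 2 * ((n : ℝ) + 1) * hermiteH n t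

open Polynomial MeasureTheory Set Filter Topology Real Asymptotics

noncomputable def hermitePoly : ℕ → ℝ[X]
  | 0 => 1
  | 1 => C 2 * X
  | n + 2 => C 2 * X * hermitePoly (n + 1) - C (2 * ((n : ℝ) + 1)) * hermitePoly n

theorem hermiteH_add_two (n : ℕ) (t : ℝ) :
    hermiteH (n + 2) t = 2 * t * hermiteH (n + 1) t - 2 * ((n : ℝ) + 1) * hermiteH n t := rfl

theorem hermiteH_eq_eval : ∀ (n : ℕ) (t : ℝ), hermiteH n t = (hermitePoly n).eval t
  | 0, t => by simp [hermiteH, hermitePoly]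
  | 1, t => by simp [hermiteH, hermitePoly]
  | n + 2, t => by
    simp [hermiteH_add_two, hermitePoly, hermiteH_eq_eval (n + 1), hermiteH_eq_eval n]

theorem hasDerivAt_hermiteH : ∀ (n : ℕ) (t : ℝ),
    HasDerivAt (hermiteH n) (2 * t * hermiteH n t - hermiteH (n + 1) t) t
  | 0, t => by simpa [hermiteH] using hasDerivAt_const t (1 : ℝ)
  | 1, t => by
    simpa [hermiteH] using (hasDerivAt_id t).const_mul (2 : ℝ)
  | n + 2, t => by
    have h := (((hasDerivAt_id t).const_mul 2).mul (hasDerivAt_hermiteH (n + 1) t)).sub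
      ((hasDerivAt_hermiteH n t).const_mul (2 * ((n : ℝ) + 1)))
    refine h.congr_deriv ?_
    rw [show n + 2 + 1 = n + 1 + 2 from rfl, hermiteH_add_two (n + 1), hermiteH_add_two n]
    simp only [id]
    push_cast
    ring

theorem Polynomial.eval_mul_exp_neg_sq_isLittleO_exp_neg (p : ℝ[X]) :
    (fun t => p.eval t * exp (-t ^ 2)) =o[atTop] fun t => exp (-t) := by
  have hgauss : (fun t : ℝ => exp (t - t ^ 2)) =o[atTop] fun t => exp (-t) := by
    rw [isLittleO_exp_comp_exp_comp]
    refine tendsto_atTop_mono' atTop ?_ tendsto_id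
    filter_upwards [eventually_ge_atTop 3] with t ht
    simp only [id]
    nlinarith
  refine ((p.tendsto_div_exp_atTop.isBigO_one ℝ).mul_isLittleO hgauss).congr (fun t => ?_)
    (fun t => one_mul _)
  rw [div_mul_eq_mul_div, mul_div_assoc, ← exp_sub]
  ring_nf

theorem Polynomial.integrableOn_Ioi_eval_mul_exp_neg_sq (p : ℝ[X]) (r : ℝ) :
    IntegrableOn (fun t => p.eval t * exp (-t ^ 2)) (Ioi r) :=
  integrable_of_isBigO_exp_neg one_pos (by fun_prop)
    (by simpa using p.eval_mul_exp_neg_sq_isLittleO_exp_neg.isBigO)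

theorem Polynomial.tendsto_eval_mul_exp_neg_sq_atTop (p : ℝ[X]) :
    Tendsto (fun t => p.eval t * exp (-t ^ 2)) atTop (𝓝 0) :=
  p.eval_mul_exp_neg_sq_isLittleO_exp_neg.tendsto_zero_of_tendsto tendsto_exp_neg_atTop_nhds_zero

theorem hasDerivAt_hermiteH_cross_mul_exp (x y : ℕ) (t : ℝ) :
    HasDerivAt
      (fun t => (hermiteH (x + 1) t * hermiteH y t - hermiteH x t * hermiteH (y + 1) t)
        * exp (-t ^ 2))
      (2 * ((x : ℝ) - y) * (hermiteH x t * hermiteH y t * exp (-t ^ 2))) t := by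
  have hgauss : HasDerivAt (fun t => exp (-t ^ 2)) (-(2 * t) * exp (-t ^ 2)) t := by
    simpa [mul_comm] using ((hasDerivAt_pow 2 t).neg).exp
  refine ((((hasDerivAt_hermiteH (x + 1) t).mul (hasDerivAt_hermiteH y t)).sub
    ((hasDerivAt_hermiteH x t).mul (hasDerivAt_hermiteH (y + 1) t))).mul hgauss).congr_deriv ?_
  rw [show x + 1 + 1 = x + 2 from rfl, show y + 1 + 1 = y + 2 from rfl, hermiteH_add_two x,
    hermiteH_add_two y, Pi.sub_apply, Pi.mul_apply, Pi.mul_apply]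
  ring

/-- For `x ≠ y` and any real `r`,
`∫_r^∞ H_x H_y e^{−t²} dt = −(1/2) e^{−r²} (H_{x+1}(r)H_y(r) − H_x(r)H_{y+1}(r))/(x−y)`. -/
theorem hermite_tail_integral (x y : ℕ) (hxy : x ≠ y) (r : ℝ) :
    ∫ t in Set.Ioi r, hermiteH x t * hermiteH y t * Real.exp (-t ^ 2)
      = -(1 / 2) * Real.exp (-r ^ 2) *
          ((hermiteH (x + 1) r * hermiteH y r - hermiteH x r * hermiteH (y + 1) r)
            / ((x : ℝ) - y)) := by
  have hxy' : (x : ℝ) - y ≠ 0 := sub_ne_zero.2 (Nat.cast_injective.ne hxy)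
  have hint : IntegrableOn (fun t => hermiteH x t * hermiteH y t * exp (-t ^ 2)) (Ioi r) := by
    simpa [hermiteH_eq_eval] using
      (hermitePoly x * hermitePoly y).integrableOn_Ioi_eval_mul_exp_neg_sq r
  have hlim : Tendsto (fun t =>
      (hermiteH (x + 1) t * hermiteH y t - hermiteH x t * hermiteH (y + 1) t) * exp (-t ^ 2))
      atTop (𝓝 0) := by
    simpa [hermiteH_eq_eval] using (hermitePoly (x + 1) * hermitePoly y
      - hermitePoly x * hermitePoly (y + 1)).tendsto_eval_mul_exp_neg_sq_atTop
  have hftc := integral_Ioi_of_hasDerivAt_of_tendsto'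
    (fun t _ => hasDerivAt_hermiteH_cross_mul_exp x y t) (hint.const_mul _) hlim
  rw [integral_const_mul] at hftc
  field_simp
  linarith
end

section
/- A Jacobi matrix A on ℓ²(ℤ_{≥0}) (real symmetric tridiagonal with positive off-diagonal entries A(x,x+1)) satisfying Σ_{x≥0} 1/A(x,x+1) = +∞ defines an essentially self-adjoint operator on the dense subspace ℓ²₀ of finitely supported sequences. -/
/-!
On finitely supported vectors the Jacobi recurrence is symmetric (summation by parts), so
`T ⊆ T†` and `T†` acts by the same recurrence. For `u, v` in the domain of `T†`, summation by
parts up to `N` leaves the boundary term `a N * (u (N+1) * v N - u N * v (N+1))`, which therefore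
converges; the bracket is summable because `u, v ∈ ℓ²`, so a nonzero limit would give
`∑ 1 / a N < ∞`. Hence `T†` is symmetric. This puts the graph of `T†` inside the adjoint of that
graph, which is the double orthogonal complement of the graph of `T`, i.e. its closure; so
`T.closure = T†`. Finally `T† ⊆ T††` by symmetry and `T†† ⊆ T†` because `T ⊆ T†`.
-/

open Filter Topology Finset

section Hilbert

variable {𝕜 E F : Type*} [RCLike 𝕜]
  [NormedAddCommGroup E] [InnerProductSpace 𝕜 E] [NormedAddCommGroup F] [InnerProductSpace 𝕜 F]

theorem LinearPMap.IsFormalAdjoint.graph_le_graph_adjoint {S : E →ₗ.[𝕜] E}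
    (hS : S.IsFormalAdjoint S) : S.graph ≤ S.graph.adjoint := by
  rintro ⟨x₁, x₂⟩ hx
  obtain ⟨y, rfl, rfl⟩ := (LinearPMap.mem_graph_iff S).1 hx
  refine (Submodule.mem_adjoint_iff _ _).2 fun p q hpq => ?_
  obtain ⟨z, rfl, rfl⟩ := (LinearPMap.mem_graph_iff S).1 hpq
  rw [hS z y, sub_self]

variable [CompleteSpace E] [CompleteSpace F]

open WithLp in
theorem Submodule.adjoint_adjoint_le_topologicalClosure (g : Submodule 𝕜 (E × F)) :
    g.adjoint.adjoint ≤ g.topologicalClosure := by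
  intro x hx
  set G : Submodule 𝕜 (WithLp 2 (E × F)) :=
    g.comap (WithLp.linearEquiv 2 𝕜 (E × F)).toLinearMap
  have hperp : toLp 2 x ∈ Gᗮᗮ := by
    refine (Submodule.mem_orthogonal _ _).2 fun w hw => ?_
    -- `w ⊥ G` says exactly that the rotated vector `(w₂, -w₁)` lies in `g.adjoint`.
    have hw' : ((ofLp w).2, -(ofLp w).1) ∈ g.adjoint := by
      refine (Submodule.mem_adjoint_iff _ _).2 fun p q hpq => ?_
      have := (Submodule.mem_orthogonal _ _).1 hw (toLp 2 (p, q)) hpq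
      simp only [prod_inner_apply] at this
      rw [inner_neg_right, sub_neg_eq_add, add_comm, ← this]
    have := (Submodule.mem_adjoint_iff _ _).1 hx _ _ hw'
    simp only [prod_inner_apply, inner_neg_left] at this ⊢
    linear_combination -this
  rw [Submodule.orthogonal_orthogonal_eq_closure, ← SetLike.mem_coe,
    Submodule.topologicalClosure_coe] at hperp
  rw [← SetLike.mem_coe, Submodule.topologicalClosure_coe]
  exact map_mem_closure (prod_continuous_ofLp 2 E F) hperp fun y hy => hy

namespace LinearPMap

theorem isSelfAdjoint_closure_of_isFormalAdjoint {T : E →ₗ.[𝕜] E}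
    (hT : Dense (T.domain : Set E)) (hsymm : T.IsFormalAdjoint T)
    (hadj : T†.IsFormalAdjoint T†) : IsSelfAdjoint T.closure := by
  have hle : T ≤ T† := hsymm.le_adjoint hT
  have hT' : Dense (T†.domain : Set E) := hT.mono hle.1
  have hgraph : T.graph.topologicalClosure = T†.graph := by
    refine le_antisymm
      (T.graph.topologicalClosure_minimal (le_graph_of_le hle) (adjoint_isClosed hT)) ?_
    calc T†.graph ≤ T†.graph.adjoint := hadj.graph_le_graph_adjoint
      _ = T.graph.adjoint.adjoint := by rw [adjoint_graph_eq_graph_adjoint hT]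
      _ ≤ T.graph.topologicalClosure := T.graph.adjoint_adjoint_le_topologicalClosure
  have hclosure : T.closure = T† := eq_of_eq_graph <| by
    rw [← IsClosable.graph_closure_eq_closure_graph ⟨T†, hgraph⟩, hgraph]
  rw [isSelfAdjoint_def, hclosure]
  refine le_antisymm (IsFormalAdjoint.le_adjoint hT fun x y => ?_) (hadj.le_adjoint hT')
  rw [← (adjoint_isFormalAdjoint hT').symm ⟨x, hle.1 x.2⟩ y,
    hle.2 (y := ⟨x, hle.1 x.2⟩) rfl]

end LinearPMap

end Hilbert

def jacobiMulVec (a b u : ℕ → ℝ) : ℕ → ℝ := fun n =>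
  a n * u (n + 1) + b n * u n + if n = 0 then 0 else a (n - 1) * u (n - 1)

theorem sum_range_succ_jacobiMulVec_mul_sub (a b u v : ℕ → ℝ) (N : ℕ) :
    ∑ n ∈ range (N + 1), (jacobiMulVec a b u n * v n - u n * jacobiMulVec a b v n) =
      a N * (u (N + 1) * v N - u N * v (N + 1)) := by
  induction N with
  | zero => simp [jacobiMulVec]; ring
  | succ N ih =>
    rw [sum_range_succ, ih]
    simp only [jacobiMulVec, Nat.add_one_ne_zero, if_false, Nat.add_sub_cancel]
    ring

theorem tsum_mul_jacobiMulVec_of_finite (a b u : ℕ → ℝ) {v : ℕ → ℝ}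
    (hv : {n | v n ≠ 0}.Finite) :
    ∑' n, u n * jacobiMulVec a b v n = ∑' n, jacobiMulVec a b u n * v n := by
  obtain ⟨M, hM⟩ := hv.bddAbove
  have hv0 : ∀ n, M < n → v n = 0 := fun n hn => by_contra fun h => (hM h).not_gt hn
  have hJv0 : ∀ n, M + 1 < n → jacobiMulVec a b v n = 0 := fun n hn => by
    simp [jacobiMulVec, hv0 (n + 1) (by omega), hv0 n (by omega), hv0 (n - 1) (by omega)]
  rw [tsum_eq_sum (s := range (M + 2)) fun n hn => by
      rw [hJv0 n (by simp at hn; omega), mul_zero],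
    tsum_eq_sum (s := range (M + 2)) fun n hn => by
      rw [hv0 n (by simp at hn; omega), mul_zero]]
  refine (sub_eq_zero.1 ?_).symm
  rw [← sum_sub_distrib, sum_range_succ_jacobiMulVec_mul_sub, hv0 (M + 1) (by omega),
    hv0 (M + 2) (by omega)]
  ring

theorem eq_zero_of_tendsto_mul_of_summable_abs {a x : ℕ → ℝ} {c : ℝ} (ha : ∀ n, 0 < a n)
    (hdiv : Tendsto (fun N => ∑ n ∈ range N, (a n)⁻¹) atTop atTop)
    (hx : Summable fun n => |x n|) (h : Tendsto (fun n => a n * x n) atTop (𝓝 c)) : c = 0 := by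
  by_contra hc
  have hc_pos : 0 < |c| := abs_pos.2 hc
  have hbound : ∀ᶠ n in atTop, ‖(a n)⁻¹‖ ≤ 2 / |c| * |x n| := by
    filter_upwards [h.abs.eventually (eventually_ge_nhds (half_lt_self hc_pos))] with n hn
    rw [abs_mul, abs_of_pos (ha n)] at hn
    rw [norm_inv, Real.norm_of_nonneg (ha n).le, inv_le_iff_one_le_mul₀' (ha n)]
    calc (1 : ℝ) = 2 / |c| * (|c| / 2) := by field_simp
      _ ≤ 2 / |c| * (a n * |x n|) := by gcongr
      _ = a n * (2 / |c| * |x n|) := by ring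
  exact not_tendsto_atTop_of_tendsto_nhds
    ((hx.mul_left _).of_norm_bounded_eventually_nat hbound).hasSum.tendsto_sum_nat hdiv

theorem summable_abs_mul_of_summable_sq {ι : Type*} {f g : ι → ℝ}
    (hf : Summable fun i => f i ^ 2) (hg : Summable fun i => g i ^ 2) :
    Summable fun i => |f i * g i| :=
  ((hf.add hg).div_const 2).of_nonneg_of_le (fun _ => abs_nonneg _) fun i => by
    rw [abs_mul]
    nlinarith [sq_abs (f i), sq_abs (g i), sq_nonneg (|f i| - |g i|)]

theorem tsum_jacobiMulVec_mul_eq_of_summable {a b : ℕ → ℝ} (ha : ∀ n, 0 < a n)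
    (hdiv : Tendsto (fun N => ∑ n ∈ range N, (a n)⁻¹) atTop atTop) {u v : ℕ → ℝ}
    (hu : Summable fun n => u n ^ 2) (hv : Summable fun n => v n ^ 2)
    (huv : Summable fun n => jacobiMulVec a b u n * v n)
    (hvu : Summable fun n => u n * jacobiMulVec a b v n) :
    ∑' n, jacobiMulVec a b u n * v n = ∑' n, u n * jacobiMulVec a b v n := by
  have hboundary : Tendsto (fun N => a N * (u (N + 1) * v N - u N * v (N + 1))) atTop
      (𝓝 (∑' n, (jacobiMulVec a b u n * v n - u n * jacobiMulVec a b v n))) := by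
    simpa only [Function.comp_def, sum_range_succ_jacobiMulVec_mul_sub] using
      (huv.sub hvu).hasSum.tendsto_sum_nat.comp (tendsto_add_atTop_nat 1)
  have hu' : Summable fun n => u (n + 1) ^ 2 := (summable_nat_add_iff 1).2 hu
  have hv' : Summable fun n => v (n + 1) ^ 2 := (summable_nat_add_iff 1).2 hv
  have hx : Summable fun N => |u (N + 1) * v N - u N * v (N + 1)| :=
    ((summable_abs_mul_of_summable_sq hu' hv).add
      (summable_abs_mul_of_summable_sq hu hv')).of_nonneg_of_le (fun _ => abs_nonneg _)
      fun _ => abs_sub _ _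
  rw [← sub_eq_zero, ← huv.tsum_sub hvu]
  exact eq_zero_of_tendsto_mul_of_summable_abs ha hdiv hx hboundary


local notation "ℓ²" => lp (fun _ : ℕ => ℝ) 2

theorem lp.dense_setOf_finite {ι : Type*} {E : ι → Type*} [∀ i, NormedAddCommGroup (E i)]
    {p : ENNReal} [Fact (1 ≤ p)] (hp : p ≠ ⊤) :
    Dense {f : lp E p | {i | f i ≠ 0}.Finite} := by
  classical
  intro f
  refine mem_closure_of_tendsto (lp.hasSum_single hp f) (Eventually.of_forall fun s => ?_)
  refine s.finite_toSet.subset fun i hi => ?_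
  by_contra his
  refine hi ?_
  simp only [lp.coeFn_sum, Finset.sum_apply]
  exact sum_eq_zero fun j hj => lp.single_apply_ne p j (f j) fun h => his (h ▸ hj)

theorem lp.real_inner_eq_tsum {ι : Type*} (f g : lp (fun _ : ι => ℝ) 2) :
    inner ℝ f g = ∑' i, f i * g i := by
  simp only [lp.inner_eq_tsum, Real.inner_apply]

structure IsJacobiOperator (a b : ℕ → ℝ) (T : ℓ² →ₗ.[ℝ] ℓ²) : Prop where
  mem_domain_iff : ∀ v : ℓ², v ∈ T.domain ↔ {n | v n ≠ 0}.Finite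
  apply_eq : ∀ v : T.domain, ⇑(T v) = jacobiMulVec a b ⇑(v : ℓ²)

namespace IsJacobiOperator

open scoped LinearPMap

variable {a b : ℕ → ℝ} {T : ℓ² →ₗ.[ℝ] ℓ²}

theorem dense_domain (hJ : IsJacobiOperator a b T) : Dense (T.domain : Set ℓ²) :=
  (lp.dense_setOf_finite (p := 2) ENNReal.ofNat_ne_top).mono fun v hv => (hJ.mem_domain_iff v).2 hv

theorem single_mem_domain (hJ : IsJacobiOperator a b T) (n : ℕ) :
    lp.single 2 n (1 : ℝ) ∈ T.domain :=
  (hJ.mem_domain_iff _).2 <| (Set.finite_singleton n).subset fun k hk => by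
    by_contra hkn
    exact hk (lp.single_apply_ne 2 n 1 hkn)

theorem isFormalAdjoint_self (hJ : IsJacobiOperator a b T) : T.IsFormalAdjoint T := by
  intro x y
  rw [lp.real_inner_eq_tsum, lp.real_inner_eq_tsum, hJ.apply_eq, hJ.apply_eq]
  exact (tsum_mul_jacobiMulVec_of_finite a b _ ((hJ.mem_domain_iff y).1 y.2)).symm

theorem adjoint_apply_eq (hJ : IsJacobiOperator a b T) (q : T†.domain) :
    ⇑(T† q) = jacobiMulVec a b ⇑(q : ℓ²) := by
  classical
  funext n
  have he := hJ.single_mem_domain n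
  calc (T† q : ℓ²) n = inner ℝ (T† q) (lp.single 2 n (1 : ℝ)) := by
        simp [lp.inner_single_right]
    _ = inner ℝ (q : ℓ²) (T ⟨_, he⟩) :=
        LinearPMap.adjoint_isFormalAdjoint hJ.dense_domain q ⟨_, he⟩
    _ = ∑' k, jacobiMulVec a b q k * (Pi.single n (1 : ℝ) : ℕ → ℝ) k := by
        rw [lp.real_inner_eq_tsum, hJ.apply_eq,
          tsum_mul_jacobiMulVec_of_finite _ _ _ ((hJ.mem_domain_iff _).1 he), lp.coeFn_single]
    _ = jacobiMulVec a b q n := by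
        rw [tsum_eq_single n fun k hk => by simp [hk]]
        simp

theorem isFormalAdjoint_adjoint (hJ : IsJacobiOperator a b T) (ha : ∀ n, 0 < a n)
    (hdiv : Tendsto (fun N => ∑ n ∈ range N, (a n)⁻¹) atTop atTop) :
    T†.IsFormalAdjoint T† := by
  intro q r
  have hmul (f g : ℓ²) : Summable fun n => f n * g n := by
    simpa only [Real.inner_apply, mul_comm] using lp.summable_inner (𝕜 := ℝ) f g
  have hsq (f : ℓ²) : Summable fun n => f n ^ 2 := by simpa only [sq] using hmul f f
  have hqr := hmul (T† q) r
  have hrq := hmul q (T† r)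
  rw [hJ.adjoint_apply_eq] at hqr hrq
  rw [lp.real_inner_eq_tsum, lp.real_inner_eq_tsum, hJ.adjoint_apply_eq, hJ.adjoint_apply_eq]
  exact tsum_jacobiMulVec_mul_eq_of_summable ha hdiv (hsq q) (hsq r) hqr hrq

end IsJacobiOperator

/-- Carleman's criterion for Jacobi matrices: a Jacobi matrix `A` on `ℓ²(ℤ_{≥0})`
(real symmetric tridiagonal with off-diagonal entries `a n = A(n,n+1) > 0` and
diagonal entries `b n = A(n,n)`) with `Σ 1/a n = +∞`, viewed as a densely defined
operator `T` with domain the finitely supported sequences, is essentially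
self-adjoint, i.e. its closure is self-adjoint. -/
theorem jacobi_matrix_essentially_selfAdjoint
    (a b : ℕ → ℝ) (ha : ∀ n, 0 < a n)
    (hdiv : Tendsto (fun N : ℕ => ∑ n ∈ Finset.range N, (a n)⁻¹) atTop atTop)
    (T : lp (fun _ : ℕ => ℝ) 2 →ₗ.[ℝ] lp (fun _ : ℕ => ℝ) 2)
    (hdom : ∀ v : lp (fun _ : ℕ => ℝ) 2,
      v ∈ T.domain ↔ Set.Finite {n : ℕ | (v : ∀ _ : ℕ, ℝ) n ≠ 0})
    (hT : ∀ (v : T.domain) (n : ℕ),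
      ((T v : lp (fun _ : ℕ => ℝ) 2) : ∀ _ : ℕ, ℝ) n =
        a n * ((v : lp (fun _ : ℕ => ℝ) 2) : ∀ _ : ℕ, ℝ) (n + 1)
          + b n * ((v : lp (fun _ : ℕ => ℝ) 2) : ∀ _ : ℕ, ℝ) n
          + if n = 0 then 0
            else a (n - 1) * ((v : lp (fun _ : ℕ => ℝ) 2) : ∀ _ : ℕ, ℝ) (n - 1)) :
    IsSelfAdjoint T.closure := by
  have hJ : IsJacobiOperator a b T := ⟨hdom, fun v => funext (hT v)⟩
  exact LinearPMap.isSelfAdjoint_closure_of_isFormalAdjoint hJ.dense_domain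
    hJ.isFormalAdjoint_self (hJ.isFormalAdjoint_adjoint ha hdiv)
end

section
/- Pushforward of the diagonal Schur measure is the Meixner ensemble: fix a, b ∈ ℤ_{≥1}, x, y ∈ ℝ_{>0} with xy < 1, and set n = min(a,b). The Schur measure SM(x,…,x; y,…,y) (a copies of x and b copies of y), which assigns to λ the weight s_λ(x,…,x) s_λ(y,…,y) ∏_{i=1}^a ∏_{j=1}^b (1 − xy), is supported on partitions with at most n parts, and its pushforward under λ ↦ {n + λ_i − i : 1 ≤ i ≤ n} ⊂ ℤ_{≥0} equals the n-point Meixner orthogonal polynomial ensemble Meixner(n, |a−b|+1, xy), i.e., the measure on n-point configurations {ℓ₁ > … > ℓ_n} ⊂ ℤ_{≥0} proportional to ∏_{i<j}(ℓ_i − ℓ_j)² ∏_i [ Γ(|a−b|+1+ℓ_i) (xy)^{ℓ_i} / (Γ(|a−b|+1) ℓ_i!) ]. -/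
/-- Value of the Schur polynomial `s_λ` at `m` equal positive variables `(x,…,x)`
(Weyl's dimension formula): `x^{|λ|} ∏_{1≤i<j≤m} (λ_i − i − λ_j + j)/(j − i)`,
where `λ` is given as a weakly decreasing sequence `lam : ℕ → ℕ` with at most `m`
nonzero parts (indices here are 0-based). -/
noncomputable def schurVal (m : ℕ) (x : ℝ) (lam : ℕ → ℕ) : ℝ :=
  x ^ (∑ i ∈ Finset.range m, lam i) *
    ∏ i ∈ Finset.range m, ∏ j ∈ Finset.range m,
      if i < j then ((lam i : ℝ) - i - (lam j : ℝ) + j) / ((j : ℝ) - i) else 1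

/-!
Weyl's formula writes `s_λ(x,…,x)` (`n` variables) as `x^{|λ|} V(ℓ)/V(δ)`, where `V` is the
Vandermonde product, `ℓ i = n - 1 - i + λ i` and `δ = ℓ` at `λ = 0`. Passing to `n + K`
variables only adds the factors with `i < n ≤ j`, whose product is
`∏ᵢ C(ℓᵢ + K, K) / C(δᵢ + K, K)`. Hence `s_λ(x^n) s_λ(y^{n+K})` is
`V(ℓ)² ∏ᵢ w(ℓᵢ) / (V(δ)² ∏ᵢ w(δᵢ))` with `w(l) = C(l + K, K) (xy)^l`, which is exactly the
Meixner weight for `β = K + 1`.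
-/

open Finset

def vandermondeProd {R : Type*} [CommRing R] (n : ℕ) (f : ℕ → R) : R :=
  ∏ i ∈ range n, ∏ j ∈ range n, if i < j then f i - f j else 1

theorem vandermondeProd_ne_zero {R : Type*} [CommRing R] [IsDomain R] {n : ℕ} {f : ℕ → R}
    (hf : Set.InjOn f (range n)) : vandermondeProd n f ≠ 0 := by
  refine prod_ne_zero_iff.2 fun i hi => prod_ne_zero_iff.2 fun j hj => ?_
  split_ifs with hij
  · exact sub_ne_zero.2 fun h => hij.ne (hf hi hj h)
  · exact one_ne_zero

theorem prod_ite_sq_eq_vandermondeProd_sq {R : Type*} [CommRing R] (n : ℕ) (f : ℕ → R) :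
    (∏ i ∈ range n, ∏ j ∈ range n, if i < j then (f i - f j) ^ 2 else 1) =
      vandermondeProd n f ^ 2 := by
  simp only [vandermondeProd, ← prod_pow, ite_pow, one_pow]

def partPositions (n : ℕ) (lam : ℕ → ℕ) (i : ℕ) : ℕ := n - 1 - i + lam i

theorem cast_partPositions {R : Type*} [Ring R] {n i : ℕ} (hi : i < n) (lam : ℕ → ℕ) :
    (partPositions n lam i : R) = n - 1 - i + lam i := by
  rw [partPositions, Nat.sub_sub, Nat.cast_add, Nat.cast_sub (by omega)]
  push_cast
  abel

theorem partPositions_injOn (n : ℕ) :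
    Set.InjOn (fun i => (partPositions n 0 i : ℝ)) (range n) := by
  intro i hi j hj h
  simp only [coe_range, Set.mem_Iio] at hi hj
  simp only [Nat.cast_inj, partPositions, Pi.zero_apply, add_zero] at h
  omega

noncomputable def weylFactor (lam : ℕ → ℕ) (i j : ℕ) : ℝ :=
  if i < j then ((lam i : ℝ) - i - (lam j : ℝ) + j) / ((j : ℝ) - i) else 1

theorem schurVal_eq_prod_weylFactor (m : ℕ) (x : ℝ) (lam : ℕ → ℕ) :
    schurVal m x lam =
      x ^ (∑ i ∈ range m, lam i) * ∏ i ∈ range m, ∏ j ∈ range m, weylFactor lam i j :=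
  rfl

theorem schurVal_eq_vandermondeProd_div (n : ℕ) (x : ℝ) (lam : ℕ → ℕ) :
    schurVal n x lam = x ^ (∑ i ∈ range n, lam i) *
      (vandermondeProd n (fun i => (partPositions n lam i : ℝ)) /
        vandermondeProd n (fun i => (partPositions n 0 i : ℝ))) := by
  rw [schurVal_eq_prod_weylFactor, vandermondeProd, vandermondeProd, ← prod_div_distrib]
  congr 1
  refine prod_congr rfl fun i hi => ?_
  rw [← prod_div_distrib]
  refine prod_congr rfl fun j hj => ?_
  rw [mem_range] at hi hj
  unfold weylFactor
  split_ifs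
  · simp only [cast_partPositions hi, cast_partPositions hj, Pi.zero_apply, Nat.cast_zero]
    ring_nf
  · rw [div_one]

theorem weylFactor_eq_one_of_le {n : ℕ} {lam : ℕ → ℕ} (hlam : ∀ i, n ≤ i → lam i = 0)
    {i : ℕ} (hi : n ≤ i) (j : ℕ) : weylFactor lam i j = 1 := by
  unfold weylFactor
  split_ifs with hij
  · rw [hlam i hi, hlam j (hi.trans hij.le)]
    have : (i : ℝ) < j := by exact_mod_cast hij
    rw [div_eq_one_iff_eq (by linarith)]
    ring
  · rfl

theorem weylFactor_add_right_of_lt {n : ℕ} {lam : ℕ → ℕ} (hlam : ∀ i, n ≤ i → lam i = 0)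
    {i : ℕ} (hi : i < n) (k : ℕ) :
    weylFactor lam i (n + k) =
      ((partPositions n lam i : ℝ) + 1 + k) / ((partPositions n 0 i : ℝ) + 1 + k) := by
  rw [weylFactor, if_pos (by omega), hlam _ (Nat.le_add_right n k), cast_partPositions hi,
    cast_partPositions hi, Pi.zero_apply, Nat.cast_zero]
  push_cast
  ring_nf

theorem prod_range_div_eq_choose_div (l d K : ℕ) :
    ∏ k ∈ range K, (((l : ℝ) + 1 + k) / ((d : ℝ) + 1 + k)) =
      ((l + K).choose K : ℝ) / (d + K).choose K := by
  have ascFactorial_eq (m : ℕ) :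
      ∏ k ∈ range K, ((m : ℝ) + 1 + k) = K.factorial * (m + K).choose K := by
    exact_mod_cast (Nat.ascFactorial_eq_prod_range (m + 1) K).symm.trans
      (Nat.ascFactorial_eq_factorial_mul_choose m K)
  rw [prod_div_distrib, ascFactorial_eq, ascFactorial_eq,
    mul_div_mul_left _ _ (by positivity)]

theorem schurVal_add {n : ℕ} {lam : ℕ → ℕ} (hlam : ∀ i, n ≤ i → lam i = 0) (K : ℕ) (x : ℝ) :
    schurVal (n + K) x lam = schurVal n x lam *
      ∏ i ∈ range n,
        ((partPositions n lam i + K).choose K : ℝ) / (partPositions n 0 i + K).choose K := by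
  have hsum : ∑ i ∈ range (n + K), lam i = ∑ i ∈ range n, lam i := by
    rw [sum_range_add, sum_eq_zero fun k _ => hlam _ (Nat.le_add_right n k), add_zero]
  have hrow (i : ℕ) (hi : i ∈ range n) : ∏ j ∈ range (n + K), weylFactor lam i j =
      (∏ j ∈ range n, weylFactor lam i j) *
        (((partPositions n lam i + K).choose K : ℝ) / (partPositions n 0 i + K).choose K) := by
    rw [prod_range_add, ← prod_range_div_eq_choose_div]
    exact congrArg _
      (prod_congr rfl fun k _ => weylFactor_add_right_of_lt hlam (mem_range.1 hi) k)
  rw [schurVal_eq_prod_weylFactor, schurVal_eq_prod_weylFactor, hsum, prod_range_add,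
    prod_congr rfl hrow, prod_mul_distrib,
    prod_eq_one fun k _ => prod_eq_one fun j _ =>
      weylFactor_eq_one_of_le hlam (Nat.le_add_right n k) j]
  ring

noncomputable def meixnerWeight (β q : ℝ) (l : ℕ) : ℝ :=
  Real.Gamma (β + l) * q ^ l / (Real.Gamma β * l.factorial)

theorem meixnerWeight_natCast_add_one (K : ℕ) (q : ℝ) (l : ℕ) :
    meixnerWeight (K + 1) q l = (l + K).choose K * q ^ l := by
  rw [meixnerWeight, show (K : ℝ) + 1 + l = ((K + l : ℕ) : ℝ) + 1 by push_cast; ring,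
    Real.Gamma_nat_eq_factorial, Real.Gamma_nat_eq_factorial, add_comm l, Nat.cast_add_choose]
  ring

theorem meixnerWeight_natCast_add_one_pos (K : ℕ) {q : ℝ} (hq : 0 < q) (l : ℕ) :
    0 < meixnerWeight (K + 1) q l := by
  rw [meixnerWeight_natCast_add_one]
  exact mul_pos (Nat.cast_pos.2 (Nat.choose_pos (Nat.le_add_left K l))) (pow_pos hq l)

theorem schurVal_mul_schurVal_add_mul {n : ℕ} {lam : ℕ → ℕ} (hlam : ∀ i, n ≤ i → lam i = 0)
    (K : ℕ) (x y : ℝ) :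
    schurVal n x lam * schurVal (n + K) y lam *
        (vandermondeProd n (fun i => (partPositions n 0 i : ℝ)) ^ 2 *
          ∏ i ∈ range n, meixnerWeight (K + 1) (x * y) (partPositions n 0 i)) =
      vandermondeProd n (fun i => (partPositions n lam i : ℝ)) ^ 2 *
        ∏ i ∈ range n, meixnerWeight (K + 1) (x * y) (partPositions n lam i) := by
  have hsum : ∑ i ∈ range n, partPositions n lam i =
      ∑ i ∈ range n, partPositions n 0 i + ∑ i ∈ range n, lam i := by
    simp only [← sum_add_distrib, partPositions, Pi.zero_apply, add_zero]
  have hchoose (i : ℕ) : ((partPositions n 0 i + K).choose K : ℝ) ≠ 0 :=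
    Nat.cast_ne_zero.2 (Nat.choose_pos (Nat.le_add_left K _)).ne'
  simp only [schurVal_add hlam, schurVal_eq_vandermondeProd_div, meixnerWeight_natCast_add_one,
    prod_mul_distrib, prod_pow_eq_pow_sum, hsum, pow_add, prod_div_distrib, mul_pow]
  field_simp [vandermondeProd_ne_zero (partPositions_injOn n),
    prod_ne_zero_iff.2 fun i _ => hchoose i]

theorem exists_schurVal_mul_schurVal_add_eq_meixner (n K : ℕ) {x y : ℝ} (hxy₀ : 0 < x * y)
    (hxy₁ : x * y < 1) :
    ∃ c : ℝ, 0 < c ∧ ∀ lam : ℕ → ℕ, (∀ i, n ≤ i → lam i = 0) →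
      schurVal n x lam * schurVal (n + K) y lam * (1 - x * y) ^ (n * (n + K)) =
        c * vandermondeProd n (fun i => (partPositions n lam i : ℝ)) ^ 2 *
          ∏ i ∈ range n, meixnerWeight (K + 1) (x * y) (partPositions n lam i) := by
  set Z := vandermondeProd n (fun i => (partPositions n 0 i : ℝ)) ^ 2 *
    ∏ i ∈ range n, meixnerWeight (K + 1) (x * y) (partPositions n 0 i) with hZ_def
  have hZ : 0 < Z :=
    mul_pos (sq_pos_of_ne_zero (vandermondeProd_ne_zero (partPositions_injOn n)))
    (prod_pos fun i _ => meixnerWeight_natCast_add_one_pos K hxy₀ _)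
  refine ⟨(1 - x * y) ^ (n * (n + K)) / Z, div_pos (pow_pos (by linarith) _) hZ,
    fun lam hlam => ?_⟩
  rw [mul_assoc _ (vandermondeProd n _ ^ 2), ← schurVal_mul_schurVal_add_mul hlam, ← hZ_def]
  field_simp

theorem schur_measure_is_meixner_ensemble_general (a b : ℕ)
    (x y : ℝ) (hx : 0 < x) (hy : 0 < y) (hxy : x * y < 1) :
    ∃ c : ℝ, 0 < c ∧
      ∀ lam : ℕ → ℕ, (∀ i j : ℕ, i ≤ j → lam j ≤ lam i) →
        (∀ i : ℕ, min a b ≤ i → lam i = 0) →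
        let n := min a b
        let β : ℝ := (((a : ℤ) - b).natAbs : ℝ) + 1
        let ℓ : ℕ → ℕ := fun i => n - 1 - i + lam i
        schurVal a x lam * schurVal b y lam * (1 - x * y) ^ (a * b) =
          c * (∏ i ∈ Finset.range n, ∏ j ∈ Finset.range n,
                if i < j then ((ℓ i : ℝ) - (ℓ j : ℝ)) ^ 2 else 1) *
            ∏ i ∈ Finset.range n,
              Real.Gamma (β + (ℓ i : ℝ)) * (x * y) ^ (ℓ i) /
                (Real.Gamma β * (Nat.factorial (ℓ i))) := by
  rcases le_total a b with hab | hba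
  · obtain ⟨K, rfl⟩ := Nat.exists_eq_add_of_le hab
    obtain ⟨c, hc, hmeixner⟩ :=
      exists_schurVal_mul_schurVal_add_eq_meixner a K (mul_pos hx hy) hxy
    refine ⟨c, hc, fun lam _ hlam => ?_⟩
    have hK : ((a : ℤ) - (a + K : ℕ)).natAbs = K := by omega
    simp only [min_eq_left hab, hK, prod_ite_sq_eq_vandermondeProd_sq] at hlam ⊢
    exact hmeixner lam hlam
  · obtain ⟨K, rfl⟩ := Nat.exists_eq_add_of_le hba
    obtain ⟨c, hc, hmeixner⟩ :=
      exists_schurVal_mul_schurVal_add_eq_meixner b K (mul_pos hy hx) (by rwa [mul_comm])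
    refine ⟨c, hc, fun lam _ hlam => ?_⟩
    have hK : (((b + K : ℕ) : ℤ) - b).natAbs = K := by omega
    simp only [min_eq_right hba, hK, prod_ite_sq_eq_vandermondeProd_sq] at hlam ⊢
    rw [mul_comm x y, mul_comm (schurVal _ x lam), mul_comm (b + K)]
    exact hmeixner lam hlam

/-- Pushforward of the diagonal Schur measure is the Meixner ensemble: for
`a, b ≥ 1`, `x, y > 0`, `xy < 1`, `n = min(a,b)`, the Schur measure weight
`s_λ(x,…,x) s_λ(y,…,y) (1−xy)^{ab}` of a partition `λ` with at most `n` parts equals,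
up to a constant `c > 0` independent of `λ`, the Meixner ensemble weight
`∏_{i<j}(ℓ_i−ℓ_j)² ∏_i Γ(β+ℓ_i)(xy)^{ℓ_i}/(Γ(β) ℓ_i!)` of the configuration
`ℓ_i = n + λ_i − i` (0-based: `ℓ i = n − 1 − i + λ i`), where `β = |a−b|+1`. -/
theorem schur_measure_is_meixner_ensemble (a b : ℕ) (ha : 1 ≤ a) (hb : 1 ≤ b)
    (x y : ℝ) (hx : 0 < x) (hy : 0 < y) (hxy : x * y < 1) :
    ∃ c : ℝ, 0 < c ∧
      ∀ lam : ℕ → ℕ, (∀ i j : ℕ, i ≤ j → lam j ≤ lam i) →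
        (∀ i : ℕ, min a b ≤ i → lam i = 0) →
        let n := min a b
        let β : ℝ := (((a : ℤ) - b).natAbs : ℝ) + 1
        let ℓ : ℕ → ℕ := fun i => n - 1 - i + lam i
        schurVal a x lam * schurVal b y lam * (1 - x * y) ^ (a * b) =
          c * (∏ i ∈ Finset.range n, ∏ j ∈ Finset.range n,
                if i < j then ((ℓ i : ℝ) - (ℓ j : ℝ)) ^ 2 else 1) *
            ∏ i ∈ Finset.range n,
              Real.Gamma (β + (ℓ i : ℝ)) * (x * y) ^ (ℓ i) /
                (Real.Gamma β * (Nat.factorial (ℓ i))) :=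
  schur_measure_is_meixner_ensemble_general a b x y hx hy hxy
end
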